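/- Let G be a connected, locally finite, quasi-transitive graph, let ρ be a fixed vertex of G, and let p ∈ [0,1] be such that the expected cluster size is finite, i.e. Σ_{x∈V} τ_p(ρ,x) < ∞. Then sup_{n≥1} (κ_p(n))^{1/n} = lim_{n→∞} (κ_p(n))^{1/n} ≤ gr(G)^{-1}. -/

import Mathlib

/-!
By the Harris inequality, `τ(x,y) τ(y,z) ≤ τ(x,z)`; splitting a geodesic gives
`κ(m) κ(n) ≤ κ(m+n)`, so Fekete's lemma applied to `-log κ` shows that `κ(n)^{1/n}`
converges to its supremum `L`. Harris also gives `κ(n) τ(ρ,x) |B(x,n)| ≤ Σ_y τ(ρ,y)`, and taking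
`n`-th roots yields `gr(G) ≤ 1/L`.

The Harris inequality is the FKG inequality for the (log-modular) finite-dimensional marginals of
the product measure; connection events are increasing unions of the events "joined by an open path
of length `≤ r`", each of which depends only on the finitely many edges near the starting point.
-/

open MeasureTheory Filter Topology

noncomputable section

namespace BernoulliPercolation

variable {V : Type*}

/-- The spanning subgraph of the retained (open) edges of a configuration `ω`:
edge `e` of `G` is retained iff `ω e = true`. -/
def openSubgraph (G : SimpleGraph V) (ω : G.edgeSet → Bool) : SimpleGraph V :=
  SimpleGraph.fromEdgeSet {e : Sym2 V | ∃ he : e ∈ G.edgeSet, ω ⟨e, he⟩ = true}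

/-- The event that `x` and `y` are connected in the percolation configuration. -/
def connEvent (G : SimpleGraph V) (x y : V) : Set (G.edgeSet → Bool) :=
  {ω | (openSubgraph G ω).Reachable x y}

/-- The event that `x` and `y` are joined by an open path of length at most `r`. -/
def connEventLe (G : SimpleGraph V) (x y : V) (r : ℕ) : Set (G.edgeSet → Bool) :=
  {ω | ∃ w : (openSubgraph G ω).Walk x y, w.IsPath ∧ w.length ≤ r}

/-- `μ` is Bernoulli bond percolation on `G` with retention parameter `p`:
the states of the edges are independent, and each edge is retained (open) with
probability `p` and deleted with probability `1 - p`. -/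
def IsBernoulli (G : SimpleGraph V) (p : ℝ) (μ : Measure (G.edgeSet → Bool)) : Prop :=
  ∀ (S : Finset G.edgeSet) (f : G.edgeSet → Bool),
    μ {ω | ∀ e ∈ S, ω e = f e} =
      ∏ e ∈ S, (if f e then ENNReal.ofReal p else ENNReal.ofReal (1 - p))

/-- The two-point (connection) probability `τ(x,y)`. -/
def tau (G : SimpleGraph V) (μ : Measure (G.edgeSet → Bool)) (x y : V) : ℝ :=
  (μ (connEvent G x y)).toReal

/-- `τ^r(x,y)`: the probability that `x` and `y` are joined by an open path of
length at most `r`. -/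
def tauLe (G : SimpleGraph V) (μ : Measure (G.edgeSet → Bool)) (x y : V) (r : ℕ) : ℝ :=
  (μ (connEventLe G x y r)).toReal

/-- `κ(n) = inf {τ(x,y) : d(x,y) ≤ n}`. -/
def kappa (G : SimpleGraph V) (μ : Measure (G.edgeSet → Bool)) (n : ℕ) : ℝ :=
  sInf {t : ℝ | ∃ x y : V, G.dist x y ≤ n ∧ t = tau G μ x y}

/-- The cluster of the vertex `x` in the configuration `ω`. -/
def cluster (G : SimpleGraph V) (ω : G.edgeSet → Bool) (x : V) : Set V :=
  {y | (openSubgraph G ω).Reachable x y}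

/-- The configuration `ω` has no infinite clusters. -/
def NoInfiniteCluster (G : SimpleGraph V) (ω : G.edgeSet → Bool) : Prop :=
  ∀ x : V, (cluster G ω x).Finite

/-- The configuration `ω` has a unique infinite cluster. -/
def UniqueInfiniteCluster (G : SimpleGraph V) (ω : G.edgeSet → Bool) : Prop :=
  ∃! c : (openSubgraph G ω).ConnectedComponent, c.supp.Infinite

/-- The critical probability `p_c`, for a family `μ p` of percolation measures. -/
def pc (G : SimpleGraph V) (μ : ℝ → Measure (G.edgeSet → Bool)) : ℝ :=
  sSup {p : ℝ | p ∈ Set.Icc (0:ℝ) 1 ∧ μ p {ω | NoInfiniteCluster G ω} = 1}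

/-- `G` is quasi-transitive: the action of `Aut(G)` on `V` has finitely many orbits. -/
def QuasiTransitive (G : SimpleGraph V) : Prop :=
  ∃ S : Finset V, ∀ x : V, ∃ y ∈ S, ∃ γ : G ≃g G, γ y = x

/-- The graph-distance ball of radius `r` about `x`. -/
def ball (G : SimpleGraph V) (x : V) (r : ℕ) : Set V :=
  {y : V | G.dist x y ≤ r}

/-- The exponential growth rate `gr(G) = liminf |B(x,r)|^{1/r}` of `G`, seen from `x`. -/
def growth (G : SimpleGraph V) (x : V) : ℝ :=
  Filter.liminf (fun r : ℕ => ((ball G x r).ncard : ℝ) ^ ((r : ℝ)⁻¹)) Filter.atTop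

/-- `G` has exponential growth: `gr(G) > 1`. -/
def ExponentialGrowth (G : SimpleGraph V) : Prop :=
  ∀ x : V, 1 < growth G x

/-- `sup_{n ≥ 1} κ(n)^{1/n}`. -/
def supKappaRoot (G : SimpleGraph V) (μ : Measure (G.edgeSet → Bool)) : ℝ :=
  sSup {t : ℝ | ∃ n : ℕ, 1 ≤ n ∧ t = kappa G μ n ^ ((n : ℝ)⁻¹)}

end BernoulliPercolation

lemma sSup_eq_of_tendsto_of_forall_le {f : ℕ → ℝ} {L : ℝ} (hf : Tendsto f atTop (𝓝 L))
    (hle : ∀ n, 1 ≤ n → f n ≤ L) : sSup {t | ∃ n, 1 ≤ n ∧ t = f n} = L := by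
  have hbdd : BddAbove {t | ∃ n, 1 ≤ n ∧ t = f n} := ⟨L, by rintro _ ⟨n, hn, rfl⟩; exact hle n hn⟩
  refine le_antisymm (csSup_le ⟨f 1, 1, le_rfl, rfl⟩ ?_) (le_of_tendsto hf ?_)
  · rintro _ ⟨n, hn, rfl⟩
    exact hle n hn
  · filter_upwards [eventually_ge_atTop 1] with n hn
    exact le_csSup hbdd ⟨n, hn, rfl⟩

lemma exists_tendsto_rpow_inv_of_supermultiplicative_of_pos {a : ℕ → ℝ} (hpos : ∀ n, 0 < a n)
    (hle : ∀ n, a n ≤ 1) (hmul : ∀ m n, a m * a n ≤ a (m + n)) :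
    ∃ L, Tendsto (fun n : ℕ => a n ^ (n : ℝ)⁻¹) atTop (𝓝 L) ∧
      ∀ n, 1 ≤ n → a n ^ (n : ℝ)⁻¹ ≤ L := by
  set u : ℕ → ℝ := fun n => -Real.log (a n)
  have hsub : Subadditive u := fun m n => by
    have := Real.log_le_log (mul_pos (hpos m) (hpos n)) (hmul m n)
    rw [Real.log_mul (hpos m).ne' (hpos n).ne'] at this
    simp only [u]
    linarith
  have hbdd : BddBelow (Set.range fun n => u n / n) :=
    ⟨0, by
      rintro _ ⟨n, rfl⟩
      exact div_nonneg (neg_nonneg.2 (Real.log_nonpos (hpos n).le (hle n))) n.cast_nonneg⟩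
  have hexp : ∀ n, a n ^ (n : ℝ)⁻¹ = Real.exp (-(u n / n)) := fun n => by
    rw [Real.rpow_def_of_pos (hpos n), neg_div, neg_neg, div_eq_mul_inv]
  refine ⟨Real.exp (-hsub.lim), ?_, fun n hn => ?_⟩
  · simp_rw [hexp]
    exact (Real.continuous_exp.tendsto _).comp (hsub.tendsto_lim hbdd).neg
  · rw [hexp, Real.exp_le_exp, neg_le_neg_iff]
    exact hsub.lim_le_div hbdd (by omega)

theorem tendsto_rpow_inv_of_supermultiplicative {a : ℕ → ℝ} (h0 : ∀ n, 0 ≤ a n)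
    (hanti : Antitone a) (hmul : ∀ m n, a m * a n ≤ a (m + n)) :
    Tendsto (fun n : ℕ => a n ^ (n : ℝ)⁻¹) atTop
      (𝓝 (sSup {t | ∃ n, 1 ≤ n ∧ t = a n ^ (n : ℝ)⁻¹})) := by
  suffices ∃ L, Tendsto (fun n : ℕ => a n ^ (n : ℝ)⁻¹) atTop (𝓝 L) ∧
      ∀ n, 1 ≤ n → a n ^ (n : ℝ)⁻¹ ≤ L by
    obtain ⟨L, hL, hle⟩ := this
    rwa [sSup_eq_of_tendsto_of_forall_le hL hle]
  rcases (h0 1).eq_or_lt with h1 | h1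
  · have hzero : ∀ n, 1 ≤ n → a n ^ (n : ℝ)⁻¹ = 0 := fun n hn => by
      rw [le_antisymm (h1 ▸ hanti hn) (h0 n), Real.zero_rpow (by positivity)]
    refine ⟨0, tendsto_const_nhds.congr' ?_, fun n hn => (hzero n hn).le⟩
    filter_upwards [eventually_ge_atTop 1] with n hn
    exact (hzero n hn).symm
  · have hpos : ∀ n, 0 < a n := fun n => by
      induction n with
      | zero => exact h1.trans_le (hanti (Nat.zero_le 1))
      | succ n ih => exact (mul_pos ih h1).trans_le (hmul n 1)
    have hle : ∀ n, a n ≤ 1 := fun n =>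
      (hanti n.zero_le).trans <| le_of_mul_le_mul_left (by simpa using hmul 0 0) (hpos 0)
    exact exists_tendsto_rpow_inv_of_supermultiplicative_of_pos hpos hle hmul

lemma pos_of_tendsto_rpow_inv {a : ℕ → ℝ} {L : ℝ} (h0 : ∀ n, 0 ≤ a n) (hanti : Antitone a)
    (ha : Tendsto (fun n : ℕ => a n ^ (n : ℝ)⁻¹) atTop (𝓝 L)) (hL : 0 < L) (n : ℕ) :
    0 < a n := by
  obtain ⟨N, hN, hpos⟩ :=
    ((eventually_ge_atTop (n + 1)).and (ha.eventually (lt_mem_nhds hL))).exists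
  refine lt_of_lt_of_le ?_ (hanti (show n ≤ N by omega))
  by_contra! h
  rw [le_antisymm h (h0 N), Real.zero_rpow (inv_ne_zero (Nat.cast_ne_zero.2 (by omega)))] at hpos
  exact hpos.false

lemma le_inv_liminf_of_mul_le_rpow_inv {a b : ℕ → ℝ} {L K : ℝ}
    (ha : Tendsto a atTop (𝓝 L)) (hL : 0 < L) (hK : 0 < K) (hb : ∀ n, 1 ≤ b n)
    (hab : ∀ n, a n * b n ≤ K ^ (n : ℝ)⁻¹) : L ≤ (liminf b atTop)⁻¹ := by
  have hK1 : Tendsto (fun n : ℕ => K ^ (n : ℝ)⁻¹) atTop (𝓝 1) := by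
    simpa using tendsto_const_nhds.rpow (tendsto_inv_atTop_zero.comp tendsto_natCast_atTop_atTop)
      (Or.inl hK.ne')
  have hlim : Tendsto (fun n : ℕ => K ^ (n : ℝ)⁻¹ / a n) atTop (𝓝 L⁻¹) := by
    rw [← one_div]
    exact hK1.div ha hL.ne'
  have hbc : ∀ᶠ n in atTop, b n ≤ K ^ (n : ℝ)⁻¹ / a n := by
    filter_upwards [ha.eventually (lt_mem_nhds hL)] with n hn
    rw [le_div_iff₀ hn, mul_comm]
    exact hab n
  have hbdd : IsBoundedUnder (· ≥ ·) atTop b := isBoundedUnder_of ⟨1, hb⟩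
  have hcobdd : IsCoboundedUnder (· ≥ ·) atTop b :=
    (hlim.isBoundedUnder_le.mono_le hbc).isCoboundedUnder_ge
  have hupper : liminf b atTop ≤ L⁻¹ :=
    hlim.liminf_eq ▸ liminf_le_liminf hbc hbdd hlim.isBoundedUnder_le.isCoboundedUnder_ge
  have hlower : 1 ≤ liminf b atTop := le_liminf_of_le hcobdd (Eventually.of_forall hb)
  exact (le_inv_comm₀ hL (one_pos.trans_le hlower)).2 hupper

section Harris

variable {ι : Type*}

lemma IsUpperSet.image_restrict {α : Type*} [Preorder α] {A : Set (ι → α)} (hA : IsUpperSet A)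
    (S : Finset ι) : IsUpperSet (S.restrict '' A) := by
  classical
  rintro _ g' hle ⟨ω, hω, rfl⟩
  refine ⟨fun e => if h : e ∈ S then g' ⟨e, h⟩ else ω e, hA (fun e => ?_) hω, ?_⟩
  · by_cases h : e ∈ S
    · simpa [h] using hle ⟨e, h⟩
    · simp [h]
  · funext e
    simp [Finset.restrict]

lemma DependsOn.eq_preimage_image_restrict {α : Type*} {A : Set (ι → α)} {S : Finset ι}
    (hA : DependsOn (· ∈ A) (S : Set ι)) : A = S.restrict ⁻¹' (S.restrict '' A) := by
  refine (Set.subset_preimage_image _ _).antisymm ?_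
  rintro ω ⟨ω', hω', heq⟩
  exact (hA fun e he => congrFun heq ⟨e, he⟩).mp hω'

lemma DependsOn.image_restrict_inter {α : Type*} {A B : Set (ι → α)} {S : Finset ι}
    (hB : DependsOn (· ∈ B) (S : Set ι)) :
    S.restrict '' (A ∩ B) = S.restrict '' A ∩ S.restrict '' B := by
  refine (Set.image_inter_subset _ _ _).antisymm ?_
  rintro _ ⟨⟨a, ha, rfl⟩, b, hb, hab⟩
  exact ⟨a, ⟨ha, (hB fun e he => congrFun hab ⟨e, he⟩).mp hb⟩, rfl⟩

lemma IsUpperSet.monotone_indicator_one {β : Type*} [Preorder β] {U : Set β}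
    (hU : IsUpperSet U) : Monotone (U.indicator (1 : β → ℝ)) := by
  intro g g' hle
  by_cases hg : g ∈ U
  · simp [hg, hU hle hg]
  · simp only [Set.indicator_of_notMem hg]
    exact Set.indicator_nonneg (fun _ _ => zero_le_one) g'

lemma Fintype.prod_mul_prod_eq_prod_inf_mul_prod_sup {κ M : Type*} [Fintype κ] [CommMonoid M]
    (w : Bool → M) (a b : κ → Bool) :
    (∏ e, w (a e)) * ∏ e, w (b e) = (∏ e, w ((a ⊓ b) e)) * ∏ e, w ((a ⊔ b) e) := by
  rw [← Finset.prod_mul_distrib, ← Finset.prod_mul_distrib]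
  refine Finset.prod_congr rfl fun e _ => ?_
  simp only [Pi.inf_apply, Pi.sup_apply]
  cases a e <;> cases b e <;> simp [mul_comm]

lemma measureReal_eq_sum_restrict_of_dependsOn [DecidableEq ι] (μ : Measure (ι → Bool))
    [IsFiniteMeasure μ] {S : Finset ι} {C : Set (ι → Bool)} (hC : DependsOn (· ∈ C) (S : Set ι)) :
    μ.real C = ∑ g, μ.real (S.restrict ⁻¹' ({g} : Set (S → Bool))) *
      (S.restrict '' C).indicator 1 g := by
  classical
  simp only [Set.indicator_apply, Pi.one_apply, mul_ite, mul_one, mul_zero, ← Finset.sum_filter]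
  rw [sum_measureReal_preimage_singleton (f := Finset.restrict (π := fun _ : ι => Bool) S) _
    fun g _ => (Finset.measurable_restrict S) (measurableSet_singleton g)]
  conv_lhs => rw [hC.eq_preimage_image_restrict]
  congr 2
  ext g
  simp

def IsBernoulliProduct (p : ℝ) (μ : Measure (ι → Bool)) : Prop :=
  ∀ (S : Finset ι) (f : ι → Bool), μ {ω | ∀ e ∈ S, ω e = f e} =
    ∏ e ∈ S, (if f e then ENNReal.ofReal p else ENNReal.ofReal (1 - p))

namespace IsBernoulliProduct

variable {p : ℝ} {μ : Measure (ι → Bool)}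

lemma isProbabilityMeasure (hμ : IsBernoulliProduct p μ) : IsProbabilityMeasure μ :=
  ⟨by simpa using hμ ∅ fun _ => true⟩

lemma measureReal_restrict_preimage_singleton (hμ : IsBernoulliProduct p μ) (S : Finset ι)
    (g : S → Bool) :
    μ.real (S.restrict ⁻¹' ({g} : Set (S → Bool))) =
      ∏ e, (if g e then ENNReal.ofReal p else ENNReal.ofReal (1 - p)).toReal := by
  classical
  have hfiber : S.restrict ⁻¹' ({g} : Set (S → Bool)) =
      {ω | ∀ e ∈ S, ω e = if h : e ∈ S then g ⟨e, h⟩ else false} := by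
    ext ω
    simp +contextual [funext_iff]
  rw [measureReal_def, hfiber, hμ, ENNReal.toReal_prod, ← Finset.prod_coe_sort S]
  refine Finset.prod_congr rfl fun e _ => ?_
  simp

/-- The **Harris inequality**. -/
theorem measureReal_mul_le_of_dependsOn (hμ : IsBernoulliProduct p μ) {S : Finset ι}
    {A B : Set (ι → Bool)} (hA : IsUpperSet A) (hB : IsUpperSet B)
    (hAS : DependsOn (· ∈ A) (S : Set ι)) (hBS : DependsOn (· ∈ B) (S : Set ι)) :
    μ.real A * μ.real B ≤ μ.real (A ∩ B) := by
  classical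
  have := hμ.isProbabilityMeasure
  set w : (S → Bool) → ℝ := fun g => μ.real (S.restrict ⁻¹' ({g} : Set (S → Bool)))
  have hw : ∀ a b, w a * w b ≤ w (a ⊓ b) * w (a ⊔ b) := fun a b => by
    simp only [w, hμ.measureReal_restrict_preimage_singleton]
    exact (Fintype.prod_mul_prod_eq_prod_inf_mul_prod_sup
      (fun c => (if c then ENNReal.ofReal p else ENNReal.ofReal (1 - p)).toReal) a b).le
  have hw1 : ∑ g, w g = 1 := by
    rw [sum_measureReal_preimage_singleton (f := Finset.restrict (π := fun _ : ι => Bool) S) _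
      fun g _ => (Finset.measurable_restrict S) (measurableSet_singleton g)]
    simp
  have hfkg := fkg _ _ w (fun _ => measureReal_nonneg)
    (Set.indicator_nonneg fun _ _ => zero_le_one) (Set.indicator_nonneg fun _ _ => zero_le_one)
    (hA.image_restrict S).monotone_indicator_one (hB.image_restrict S).monotone_indicator_one hw
  have hAB : DependsOn (· ∈ A ∩ B) (S : Set ι) := fun ω ω' h => by
    simp only [Set.mem_inter_iff, hAS h, hBS h]
  rw [measureReal_eq_sum_restrict_of_dependsOn μ hAS,
    measureReal_eq_sum_restrict_of_dependsOn μ hBS, measureReal_eq_sum_restrict_of_dependsOn μ hAB, hBS.image_restrict_inter,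
    Set.inter_indicator_one]
  rw [hw1, one_mul] at hfkg
  exact hfkg

theorem measureReal_mul_le_of_iUnion (hμ : IsBernoulliProduct p μ) {A B : ℕ → Set (ι → Bool)}
    (hAm : Monotone A) (hBm : Monotone B) (hA : ∀ r, IsUpperSet (A r)) (hB : ∀ r, IsUpperSet (B r))
    (hAS : ∀ r, ∃ S : Finset ι, DependsOn (· ∈ A r) (S : Set ι))
    (hBS : ∀ r, ∃ S : Finset ι, DependsOn (· ∈ B r) (S : Set ι)) :
    μ.real (⋃ r, A r) * μ.real (⋃ r, B r) ≤ μ.real ((⋃ r, A r) ∩ ⋃ r, B r) := by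
  classical
  have := hμ.isProbabilityMeasure
  have hfinite : ∀ r, μ.real (A r) * μ.real (B r) ≤ μ.real (A r ∩ B r) := fun r => by
    obtain ⟨S, hS⟩ := hAS r
    obtain ⟨T, hT⟩ := hBS r
    exact hμ.measureReal_mul_le_of_dependsOn (S := S ∪ T) (hA r) (hB r)
      (hS.mono (by simp)) (hT.mono (by simp))
  have hlim : ∀ C : ℕ → Set (ι → Bool), Monotone C →
      Tendsto (fun r => μ.real (C r)) atTop (𝓝 (μ.real (⋃ r, C r))) := fun C hC =>
    (ENNReal.tendsto_toReal (measure_ne_top μ _)).comp (tendsto_measure_iUnion_atTop hC)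
  rw [← Set.iUnion_inter_of_monotone hAm hBm]
  exact le_of_tendsto_of_tendsto' ((hlim A hAm).mul (hlim B hBm)) (hlim _ (hAm.inter hBm))
    hfinite

end IsBernoulliProduct

end Harris

namespace BernoulliPercolation

variable {V : Type*} {G : SimpleGraph V} {p : ℝ} {μ : Measure (G.edgeSet → Bool)}

lemma IsBernoulli.isBernoulliProduct (hμ : IsBernoulli G p μ) : IsBernoulliProduct p μ := hμ

lemma mem_edgeSet_openSubgraph {ω : G.edgeSet → Bool} {e : Sym2 V} :
    e ∈ (openSubgraph G ω).edgeSet ↔ ∃ he : e ∈ G.edgeSet, ω ⟨e, he⟩ = true := by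
  rw [openSubgraph, SimpleGraph.edgeSet_fromEdgeSet]
  exact ⟨fun h => h.1, fun h => ⟨h, G.not_isDiag_of_mem_edgeSet h.1⟩⟩

lemma openSubgraph_le (ω : G.edgeSet → Bool) : openSubgraph G ω ≤ G :=
  SimpleGraph.edgeSet_subset_edgeSet.1 fun _ h => (mem_edgeSet_openSubgraph.1 h).1

lemma openSubgraph_mono : Monotone (openSubgraph G) := fun ω ω' hle =>
  SimpleGraph.edgeSet_subset_edgeSet.1 fun _ h => by
    obtain ⟨he, hω⟩ := mem_edgeSet_openSubgraph.1 h
    have hω' := hle ⟨_, he⟩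
    rw [hω] at hω'
    exact mem_edgeSet_openSubgraph.2 ⟨he, top_unique hω'⟩

def incidentEdges (G : SimpleGraph V) (s : Set V) : Set G.edgeSet :=
  {e | ∃ u ∈ s, u ∈ (e : Sym2 V)}

lemma finite_incidentEdges (hlf : ∀ v : V, (G.neighborSet v).Finite) {s : Set V}
    (hs : s.Finite) : (incidentEdges G s).Finite := by
  classical
  have hinc : ∀ u, (G.incidenceSet u).Finite := fun u => by
    have := (hlf u).to_subtype
    exact Set.finite_coe_iff.1 (Finite.of_equiv _ (G.incidenceSetEquivNeighborSet u).symm)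
  refine (hs.biUnion fun u _ => (hinc u).preimage Subtype.val_injective.injOn).subset ?_
  rintro e ⟨u, hu, hue⟩
  exact Set.mem_biUnion hu ⟨e.2, hue⟩

lemma finite_setOf_edist_le (hlf : ∀ v : V, (G.neighborSet v).Finite) (x : V) (r : ℕ) :
    {u | G.edist x u ≤ r}.Finite := by
  induction r generalizing x with
  | zero =>
    exact (Set.finite_singleton x).subset fun u hu => by simpa using hu
  | succ r ih =>
    refine ((hlf x).biUnion fun y _ => ih y).insert x |>.subset fun u hu => ?_
    obtain ⟨w, hw⟩ := SimpleGraph.exists_walk_of_edist_ne_top (ne_top_of_le_ne_top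
      (by simp) (hu : G.edist x u ≤ (r + 1 : ℕ)))
    cases w with
    | nil => exact Set.mem_insert _ _
    | @cons _ y _ hxy q =>
      refine Set.mem_insert_of_mem _ (Set.mem_biUnion hxy ?_)
      have hlen : ((SimpleGraph.Walk.cons hxy q).length : ℕ∞) ≤ (r + 1 : ℕ) := hw ▸ hu
      rw [SimpleGraph.Walk.length_cons] at hlen
      have hlen : q.length + 1 ≤ r + 1 := by exact_mod_cast hlen
      exact (SimpleGraph.edist_le q).trans (by exact_mod_cast (by omega : q.length ≤ r))

lemma finite_ball (hconn : G.Connected) (hlf : ∀ v : V, (G.neighborSet v).Finite) (x : V)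
    (r : ℕ) : (ball G x r).Finite :=
  (finite_setOf_edist_le hlf x r).subset fun u (hu : G.dist x u ≤ r) => by
    show G.edist x u ≤ r
    rw [← (hconn x u).coe_dist_eq_edist]
    exact_mod_cast hu

lemma one_le_ncard_ball (hconn : G.Connected) (hlf : ∀ v : V, (G.neighborSet v).Finite)
    (x : V) (r : ℕ) : 1 ≤ (ball G x r).ncard :=
  (Set.ncard_pos (finite_ball hconn hlf x r)).2 ⟨x, by simp [ball]⟩

lemma connEventLe_mono (x y : V) : Monotone (connEventLe G x y) :=
  fun _ _ hrs _ ⟨w, hw, hlen⟩ => ⟨w, hw, hlen.trans hrs⟩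

lemma isUpperSet_connEventLe (x y : V) (r : ℕ) : IsUpperSet (connEventLe G x y r) :=
  fun _ _ hle ⟨w, hw, hlen⟩ =>
    ⟨w.mapLe (openSubgraph_mono hle), (SimpleGraph.Walk.isPath_mapLe _).2 hw,
      (w.length_mapLe _).trans_le hlen⟩

lemma iUnion_connEventLe (x y : V) : ⋃ r, connEventLe G x y r = connEvent G x y := by
  ext ω
  simp only [Set.mem_iUnion]
  constructor
  · rintro ⟨r, w, -, -⟩
    exact w.reachable
  · intro h
    obtain ⟨w, hw⟩ := SimpleGraph.Reachable.exists_isPath h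
    exact ⟨w.length, w, hw, le_rfl⟩

lemma dependsOn_connEventLe (x y : V) (r : ℕ) :
    DependsOn (· ∈ connEventLe G x y r) (incidentEdges G {u | G.edist x u ≤ r}) := by
  suffices h : ∀ ω ω' : G.edgeSet → Bool, (∀ e ∈ incidentEdges G {u | G.edist x u ≤ r},
      ω e = ω' e) → ω ∈ connEventLe G x y r → ω' ∈ connEventLe G x y r from
    fun ω ω' hagree => propext ⟨h ω ω' hagree, h ω' ω fun e he => (hagree e he).symm⟩
  classical
  rintro ω ω' hagree ⟨w, hw, hlen⟩
  refine ⟨w.transfer _ fun e he => ?_, hw.transfer _, (w.length_transfer _).trans_le hlen⟩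
  obtain ⟨heG, hopen⟩ := mem_edgeSet_openSubgraph.1 (w.edges_subset_edgeSet he)
  refine mem_edgeSet_openSubgraph.2 ⟨heG, hagree ⟨e, heG⟩ ?_ ▸ hopen⟩
  induction e using Sym2.ind with
  | h a b =>
    have ha := w.fst_mem_support_of_mem_edges he
    refine ⟨a, ?_, Sym2.mem_mk_left a b⟩
    calc G.edist x a ≤ ((w.takeUntil a ha).mapLe (openSubgraph_le ω)).length :=
          SimpleGraph.edist_le _
      _ ≤ r := by
        rw [SimpleGraph.Walk.length_mapLe]
        exact_mod_cast (w.length_takeUntil_le_length ha).trans hlen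

theorem tau_mul_tau_le (hlf : ∀ v : V, (G.neighborSet v).Finite) (hμ : IsBernoulli G p μ)
    (x y z : V) : tau G μ x y * tau G μ y z ≤ tau G μ x z := by
  have := hμ.isBernoulliProduct.isProbabilityMeasure
  have hsupp : ∀ x y r, ∃ S : Finset G.edgeSet, DependsOn (· ∈ connEventLe G x y r) (S : Set _) :=
    fun x y r => ⟨(finite_incidentEdges hlf (finite_setOf_edist_le hlf x r)).toFinset, by
      simpa only [Set.Finite.coe_toFinset] using dependsOn_connEventLe x y r⟩
  have harris := hμ.isBernoulliProduct.measureReal_mul_le_of_iUnion (connEventLe_mono x y)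
    (connEventLe_mono y z) (isUpperSet_connEventLe x y) (isUpperSet_connEventLe y z)
    (hsupp x y) (hsupp y z)
  simp only [iUnion_connEventLe] at harris
  exact harris.trans (measureReal_mono fun ω h => h.1.trans h.2)

lemma tau_nonneg (x y : V) : 0 ≤ tau G μ x y := ENNReal.toReal_nonneg

lemma kappa_nonneg (n : ℕ) : 0 ≤ kappa G μ n :=
  Real.sInf_nonneg <| by
    rintro _ ⟨x, y, -, rfl⟩
    exact tau_nonneg x y

lemma kappa_le_tau {x y : V} {n : ℕ} (h : G.dist x y ≤ n) : kappa G μ n ≤ tau G μ x y :=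
  csInf_le ⟨0, by rintro _ ⟨x, y, -, rfl⟩; exact tau_nonneg x y⟩ ⟨x, y, h, rfl⟩

lemma nonempty_kappaSet [Nonempty V] (n : ℕ) :
    {t : ℝ | ∃ x y : V, G.dist x y ≤ n ∧ t = tau G μ x y}.Nonempty :=
  let x := Classical.arbitrary V
  ⟨_, x, x, by simp, rfl⟩

lemma kappa_antitone [Nonempty V] : Antitone (kappa G μ) := fun _ _ hmn =>
  le_csInf (nonempty_kappaSet _) fun _ ⟨_, _, h, ht⟩ => ht ▸ kappa_le_tau (h.trans hmn)

lemma _root_.SimpleGraph.Connected.exists_dist_le_of_dist_le_add (hconn : G.Connected)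
    {x z : V} {m n : ℕ} (h : G.dist x z ≤ m + n) : ∃ y, G.dist x y ≤ m ∧ G.dist y z ≤ n := by
  obtain ⟨w, hw⟩ := hconn.exists_walk_length_eq_dist x z
  refine ⟨w.getVert m, (SimpleGraph.dist_le (w.take m)).trans ?_,
    (SimpleGraph.dist_le (w.drop m)).trans ?_⟩
  · rw [SimpleGraph.Walk.take_length]
    exact inf_le_left
  · rw [SimpleGraph.Walk.drop_length]
    omega

lemma kappa_mul_kappa_le (hconn : G.Connected) (hlf : ∀ v : V, (G.neighborSet v).Finite)
    (hμ : IsBernoulli G p μ) (m n : ℕ) : kappa G μ m * kappa G μ n ≤ kappa G μ (m + n) := by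
  have := hconn.nonempty
  refine le_csInf (nonempty_kappaSet _) ?_
  rintro _ ⟨x, z, h, rfl⟩
  obtain ⟨y, hxy, hyz⟩ := hconn.exists_dist_le_of_dist_le_add h
  calc kappa G μ m * kappa G μ n ≤ tau G μ x y * tau G μ y z :=
        mul_le_mul (kappa_le_tau hxy) (kappa_le_tau hyz) (kappa_nonneg n) (tau_nonneg x y)
    _ ≤ tau G μ x z := tau_mul_tau_le hlf hμ x y z

lemma kappa_mul_tau_mul_ncard_ball_le (hconn : G.Connected)
    (hlf : ∀ v : V, (G.neighborSet v).Finite) (hμ : IsBernoulli G p μ) {ρ : V}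
    (hsum : ∑' z : V, μ (connEvent G ρ z) ≠ ⊤) (x : V) (n : ℕ) :
    kappa G μ n * tau G μ ρ x * (ball G x n).ncard ≤ (∑' z : V, μ (connEvent G ρ z)).toReal := by
  have := hμ.isBernoulliProduct.isProbabilityMeasure
  have hfin := finite_ball hconn hlf x n
  calc kappa G μ n * tau G μ ρ x * (ball G x n).ncard
      = ∑ _y ∈ hfin.toFinset, kappa G μ n * tau G μ ρ x := by
        rw [Finset.sum_const, Set.ncard_eq_toFinset_card _ hfin, nsmul_eq_mul, mul_comm]
    _ ≤ ∑ y ∈ hfin.toFinset, tau G μ ρ y := Finset.sum_le_sum fun y hy =>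
        calc kappa G μ n * tau G μ ρ x ≤ tau G μ ρ x * tau G μ x y := by
              rw [mul_comm]
              exact mul_le_mul_of_nonneg_left (kappa_le_tau (hfin.mem_toFinset.1 hy))
                (tau_nonneg ρ x)
          _ ≤ tau G μ ρ y := tau_mul_tau_le hlf hμ ρ x y
    _ = (∑ y ∈ hfin.toFinset, μ (connEvent G ρ y)).toReal :=
        (ENNReal.toReal_sum fun y _ => measure_ne_top μ _).symm
    _ ≤ (∑' z : V, μ (connEvent G ρ z)).toReal := ENNReal.toReal_mono hsum (ENNReal.sum_le_tsum _)

lemma growth_nonneg (G : SimpleGraph V) (x : V) : 0 ≤ growth G x := by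
  rw [growth, liminf_eq]
  exact Real.sSup_nonneg' ⟨0, Eventually.of_forall fun r => by positivity, le_rfl⟩

theorem le_inv_growth_of_tendsto (hconn : G.Connected) (hlf : ∀ v : V, (G.neighborSet v).Finite)
    (hμ : IsBernoulli G p μ) {ρ : V} (hsum : ∑' z : V, μ (connEvent G ρ z) ≠ ⊤) {L : ℝ}
    (hL : Tendsto (fun n : ℕ => kappa G μ n ^ ((n : ℝ)⁻¹)) atTop (𝓝 L)) (x : V) :
    L ≤ (growth G x)⁻¹ := by
  rcases le_or_gt L 0 with hL0 | hL0
  · exact hL0.trans (inv_nonneg.2 (growth_nonneg G x))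
  have := hconn.nonempty
  have hκ := pos_of_tendsto_rpow_inv kappa_nonneg kappa_antitone hL hL0
  have hτ : 0 < tau G μ ρ x := (hκ _).trans_le (kappa_le_tau le_rfl)
  have hbound := kappa_mul_tau_mul_ncard_ball_le hconn hlf hμ hsum x
  have hball : ∀ n, (1 : ℝ) ≤ (ball G x n).ncard := fun n => by
    exact_mod_cast one_le_ncard_ball hconn hlf x n
  have hC : 0 < (∑' z : V, μ (connEvent G ρ z)).toReal :=
    (mul_pos (mul_pos (hκ 0) hτ) (one_pos.trans_le (hball 0))).trans_le (hbound 0)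
  refine le_inv_liminf_of_mul_le_rpow_inv hL hL0 (div_pos hC hτ)
    (fun n => Real.one_le_rpow (hball n) (by positivity)) fun n => ?_
  rw [← Real.mul_rpow (kappa_nonneg n) (Nat.cast_nonneg _)]
  refine Real.rpow_le_rpow (mul_nonneg (kappa_nonneg n) (Nat.cast_nonneg _)) ?_ (by positivity)
  rw [le_div_iff₀ hτ]
  linarith [hbound n]

theorem supKappaRoot_eq_lim_le_growth_inv_general
    {V : Type*} (G : SimpleGraph V)
    (hconn : G.Connected) (hlf : ∀ v : V, (G.neighborSet v).Finite)
    (ρ : V) (p : ℝ)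
    (μ : Measure (G.edgeSet → Bool)) (hμ : IsBernoulli G p μ)
    (hsum : ∑' x : V, μ (connEvent G ρ x) ≠ ⊤) :
    Filter.Tendsto (fun n : ℕ => kappa G μ n ^ ((n : ℝ)⁻¹)) Filter.atTop
        (𝓝 (supKappaRoot G μ)) ∧
      ∀ x : V, supKappaRoot G μ ≤ (growth G x)⁻¹ := by
  have := hconn.nonempty
  have hlim : Tendsto (fun n : ℕ => kappa G μ n ^ ((n : ℝ)⁻¹)) atTop (𝓝 (supKappaRoot G μ)) :=
    tendsto_rpow_inv_of_supermultiplicative kappa_nonneg kappa_antitone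
      (kappa_mul_kappa_le hconn hlf hμ)
  exact ⟨hlim, le_inv_growth_of_tendsto hconn hlf hμ hsum hlim⟩

/-- On a connected, locally finite, quasi-transitive graph, if the
expected cluster size `Σ_x τ_p(ρ,x)` is finite, then
`sup_{n ≥ 1} κ_p(n)^{1/n} = lim_{n→∞} κ_p(n)^{1/n} ≤ gr(G)⁻¹`. -/
theorem supKappaRoot_eq_lim_le_growth_inv
    {V : Type*} (G : SimpleGraph V)
    (hconn : G.Connected) (hlf : ∀ v : V, (G.neighborSet v).Finite)
    (hqt : QuasiTransitive G)
    (ρ : V) (p : ℝ) (hp : p ∈ Set.Icc (0:ℝ) 1)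
    (μ : Measure (G.edgeSet → Bool)) (hμ : IsBernoulli G p μ)
    (hsum : ∑' x : V, μ (connEvent G ρ x) ≠ ⊤) :
    Filter.Tendsto (fun n : ℕ => kappa G μ n ^ ((n : ℝ)⁻¹)) Filter.atTop
        (𝓝 (supKappaRoot G μ)) ∧
      ∀ x : V, supKappaRoot G μ ≤ (growth G x)⁻¹ :=
  supKappaRoot_eq_lim_le_growth_inv_general G hconn hlf ρ p μ hμ hsum

end BernoulliPercolation
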